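/- For every a ∈ ℂ, the type D.6_a bracket table satisfies the Jacobi identity, hence defines a 6-dimensional complex Lie algebra 𝔣_a; and the determinant of the Gram matrix of the Killing form of 𝔣_a with respect to the basis (T, X1, X2, X3, X4, X5) equals 4096·(4a²+9)³·(a²−4)². -/

import Mathlib

set_option maxHeartbeats 1000000

noncomputable def d6c (a : ℂ) : Fin 6 → Fin 6 → Fin 6 → ℂ :=
  ![![![0, 0, 0, 0, 0, 0],
     ![0, 1, 0, 0, 0, 0],
     ![0, 0, (-1), 0, 0, 0],
     ![0, 0, 0, 0, 0, 0],
     ![0, 0, 0, 0, 1, 0],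
     ![0, 0, 0, 0, 0, (-1)]],
   ![![0, (-1), 0, 0, 0, 0],
     ![0, 0, 0, 0, 0, 0],
     ![(3*a), 0, 0, (-2), 0, 0],
     ![0, (2*a), 0, 0, 3, 0],
     ![0, 0, 0, 0, 0, 0],
     ![6, 0, 0, (-a), 0, 0]],
   ![![0, 0, 1, 0, 0, 0],
     ![(-(3*a)), 0, 0, 2, 0, 0],
     ![0, 0, 0, 0, 0, 0],
     ![0, 0, (-(2*a)), 0, 0, (-3)],
     ![(-6), 0, 0, (a), 0, 0],
     ![0, 0, 0, 0, 0, 0]],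
   ![![0, 0, 0, 0, 0, 0],
     ![0, (-(2*a)), 0, 0, (-3), 0],
     ![0, 0, (-(-(2*a))), 0, 0, 3],
     ![0, 0, 0, 0, 0, 0],
     ![0, (-(a^2+3)), 0, 0, 0, 0],
     ![0, 0, (a^2+3), 0, 0, 0]],
   ![![0, 0, 0, 0, (-1), 0],
     ![0, 0, 0, 0, 0, 0],
     ![6, 0, 0, (-(a)), 0, 0],
     ![0, (-(-(a^2+3))), 0, 0, 0, 0],
     ![0, 0, 0, 0, 0, 0],
     ![(a*(a^2-1)), 0, 0, (-2), 0, 0]],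
   ![![0, 0, 0, 0, 0, 1],
     ![(-6), 0, 0, (-(-a)), 0, 0],
     ![0, 0, 0, 0, 0, 0],
     ![0, 0, (-(a^2+3)), 0, 0, 0],
     ![(-(a*(a^2-1))), 0, 0, 2, 0, 0],
     ![0, 0, 0, 0, 0, 0]]]

noncomputable def d6br (a : ℂ) (x y : Fin 6 → ℂ) : Fin 6 → ℂ :=
  fun k => ∑ i : Fin 6, ∑ j : Fin 6, x i * y j * d6c a i j k

/-!
The hypotheses say that `T, X1, …, X5` is a basis of `F` whose structure constants are `d6c a`.
Hence `ad (b i)` has matrix `(d6c a i l k)_{k,l}` and the Killing form is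
`K(b i, b j) = ∑ k l, d6c a i l k * d6c a j k l`, a matrix of polynomials in `a` whose
determinant is computed directly. The Jacobi identity of the table is a polynomial identity in the
coordinates, independent of `F`.
-/

namespace LieAlgebra

variable {R L ι : Type*} [CommRing R] [LieRing L] [LieAlgebra R L]

theorem lie_eq_sum_of_lt [Fintype ι] [LinearOrder ι] (v : ι → L) (c : ι → ι → ι → R)
    (hself : ∀ i, c i i = 0) (hswap : ∀ i j, c j i = -c i j)
    (h : ∀ i j, i < j → ⁅v i, v j⁆ = ∑ k, c i j k • v k) (i j : ι) :
    ⁅v i, v j⁆ = ∑ k, c i j k • v k := by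
  rcases lt_trichotomy i j with hij | rfl | hji
  · exact h i j hij
  · simp [hself]
  · rw [← lie_skew, h j i hji, hswap, ← Finset.sum_neg_distrib]
    simp

variable [Fintype ι] [DecidableEq ι]

theorem toMatrix_ad_basis (b : Module.Basis ι R L) (c : ι → ι → ι → R)
    (hc : ∀ i j, ⁅b i, b j⁆ = ∑ k, c i j k • b k) (i : ι) :
    LinearMap.toMatrix b b (ad R L (b i)) = Matrix.of fun k j => c i j k := by
  ext k j
  rw [LinearMap.toMatrix_apply, ad_apply, hc, Module.Basis.repr_sum_self, Matrix.of_apply]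

theorem killingForm_basis (b : Module.Basis ι R L) (c : ι → ι → ι → R)
    (hc : ∀ i j, ⁅b i, b j⁆ = ∑ k, c i j k • b k) (i j : ι) :
    killingForm R L (b i) (b j) = ∑ k, ∑ l, c i l k * c j k l := by
  rw [killingForm_apply_apply, LinearMap.trace_eq_matrix_trace R b, LinearMap.toMatrix_comp b b b,
    toMatrix_ad_basis b c hc, toMatrix_ad_basis b c hc]
  simp [Matrix.trace, Matrix.mul_apply]

end LieAlgebra

theorem d6br_jacobi (a : ℂ) (x y z : Fin 6 → ℂ) :
    d6br a x (d6br a y z) + d6br a y (d6br a z x) + d6br a z (d6br a x y) = 0 := by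
  funext k
  fin_cases k <;> simp [d6br, d6c, Fin.sum_univ_six] <;> ring

theorem d6c_self (a : ℂ) (i : Fin 6) : d6c a i i = 0 := by
  fin_cases i <;> simp [d6c]

theorem d6c_swap (a : ℂ) (i j : Fin 6) : d6c a j i = -d6c a i j := by
  fin_cases i <;> fin_cases j <;> simp [d6c]

noncomputable def d6killing (a : ℂ) : Matrix (Fin 6) (Fin 6) ℂ :=
  !![4, 0, 0, -4 * a, 0, 0;
     0, 0, 20 * a, 0, 0, 4 * a ^ 2 + 24;
     0, 20 * a, 0, 0, 4 * a ^ 2 + 24, 0;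
     -4 * a, 0, 0, 20 * a ^ 2 + 36, 0, 0;
     0, 0, 4 * a ^ 2 + 24, 0, 0, 4 * a ^ 3 + 4 * a;
     0, 4 * a ^ 2 + 24, 0, 0, 4 * a ^ 3 + 4 * a, 0]

theorem sum_d6c_mul_d6c (a : ℂ) (i j : Fin 6) :
    ∑ k, ∑ l, d6c a i l k * d6c a j k l = d6killing a i j := by
  fin_cases i <;> fin_cases j <;> simp [d6c, d6killing, Fin.sum_univ_six] <;> ring

/- The `ad T`-weights of `T, X3` are `0` and those of `X1, X4` resp. `X2, X5` are `±1`, so the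
matrix splits into the block on `T, X3` (determinant `16 (4a² + 9)`) and two mutually transposed
blocks pairing `X1, X4` with `X2, X5` (determinant `16 (4a² + 9)(a² - 4)` each). -/
theorem det_d6killing (a : ℂ) :
    (d6killing a).det = 4096 * (4 * a ^ 2 + 9) ^ 3 * (a ^ 2 - 4) ^ 2 := by
  simp +decide [d6killing, Matrix.det_succ_row_zero, Fin.sum_univ_succ, Fin.succAbove]
  ring

theorem D6_table_jacobi_and_killing_det (a : ℂ)
    {F : Type*} [LieRing F] [LieAlgebra ℂ F]
    (T X1 X2 X3 X4 X5 : F)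
    (hbindep : LinearIndependent ℂ ![T, X1, X2, X3, X4, X5])
    (hbspan : Submodule.span ℂ (Set.range ![T, X1, X2, X3, X4, X5]) = ⊤)
    (hb01 : ⁅T, X1⁆ = X1)
    (hb02 : ⁅T, X2⁆ = -X2)
    (hb03 : ⁅T, X3⁆ = 0)
    (hb04 : ⁅T, X4⁆ = X4)
    (hb05 : ⁅T, X5⁆ = -X5)
    (hb12 : ⁅X1, X2⁆ = (3*a) • T + (-2 : ℂ) • X3)
    (hb13 : ⁅X1, X3⁆ = (2*a) • X1 + (3 : ℂ) • X4)
    (hb14 : ⁅X1, X4⁆ = 0)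
    (hb15 : ⁅X1, X5⁆ = (6 : ℂ) • T + (-a) • X3)
    (hb23 : ⁅X2, X3⁆ = (-(2*a)) • X2 + (-3 : ℂ) • X5)
    (hb24 : ⁅X2, X4⁆ = (-6 : ℂ) • T + (a) • X3)
    (hb25 : ⁅X2, X5⁆ = 0)
    (hb34 : ⁅X3, X4⁆ = (-(a^2+3)) • X1)
    (hb35 : ⁅X3, X5⁆ = (a^2+3) • X2)
    (hb45 : ⁅X4, X5⁆ = (a*(a^2-1)) • T + (-2 : ℂ) • X3) :
    (∀ x y z : Fin 6 → ℂ,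
      d6br a x (d6br a y z) + d6br a y (d6br a z x) + d6br a z (d6br a x y) = 0) ∧
    Matrix.det (Matrix.of fun i j =>
        killingForm ℂ F (![T, X1, X2, X3, X4, X5] i) (![T, X1, X2, X3, X4, X5] j)) =
      4096 * (4 * a ^ 2 + 9) ^ 3 * (a ^ 2 - 4) ^ 2 := by
  refine ⟨d6br_jacobi a, ?_⟩
  let b : Module.Basis (Fin 6) ℂ F := Module.Basis.mk hbindep hbspan.ge
  have hb : ⇑b = ![T, X1, X2, X3, X4, X5] := funext (Module.Basis.mk_apply hbindep hbspan.ge)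
  have hc : ∀ i j, ⁅b i, b j⁆ = ∑ k, d6c a i j k • b k := by
    refine LieAlgebra.lie_eq_sum_of_lt _ _ (d6c_self a) (d6c_swap a) fun i j hij => ?_
    rw [hb]
    fin_cases i <;> fin_cases j <;> simp at hij <;>
      simp [d6c, Fin.sum_univ_six, hb01, hb02, hb03, hb04, hb05, hb12, hb13, hb14, hb15,
        hb23, hb24, hb25, hb34, hb35, hb45]
  have hK : Matrix.of (fun i j => killingForm ℂ F (b i) (b j)) = d6killing a := by
    ext i j
    rw [Matrix.of_apply, LieAlgebra.killingForm_basis b _ hc, sum_d6c_mul_d6c]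
  rw [← hb, hK, det_d6killing]
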